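/- Let Λ and Γ be g-fusion frames for H and K with bounds (A, B) and (C, D) and frame operators S_Λ, S_Γ, and set S = S_Λ ⊗ S_Γ. Then the canonical dual family Θ = {(S^{-1}(V_i ⊗ W_j), (Λ_i ⊗ Γ_j) P_{V_i ⊗ W_j} S^{-1}, v_i w_j)}_{i,j} is a g-fusion frame for H ⊗ K with lower bound 1/(BD) and upper bound BD/(A²C²). -/

import Mathlib

/-! A g-fusion frame `{(V i, Λ i, v i)}` is the g-frame `T i = v i • Λ i ∘ P_{V i}`, with frame
operator `S_Λ = ∑ T i† T i`, so `S_Λ`, its inverse and `S⁻¹ = S_Λ⁻¹ ⊗ S_Γ⁻¹` are self-adjoint.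
Self-adjointness of `S⁻¹` lets the projection onto `S⁻¹(V_i ⊗ W_j)` be dropped, after which each
term on `f ⊗ g` factors as `v_i² ‖Λ_i P_{V_i} S_Λ⁻¹ f‖² · w_j² ‖Γ_j P_{W_j} S_Γ⁻¹ g‖²`. The double
sum is therefore the product of the canonical dual sums of `Λ` and `Γ`, and such a sum lies between
`‖f‖² / B` (because `‖S_Λ h‖² ≤ B ⟪h, S_Λ h⟫`) and `B ‖f‖² / A²` (because `A ‖S_Λ⁻¹ f‖ ≤ ‖f‖`).
-/

noncomputable section

open Submodule ContinuousLinearMap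

local notation "⟪" x ", " y "⟫" => @inner ℂ _ _ x y

/-- An abstract realization of the Hilbert-space tensor product of `H` and `K`:
a map `tmul : H → K → E` whose inner products multiply and whose elementary
tensors have dense span. -/
structure HilbertTensor (H K E : Type*) [NormedAddCommGroup H] [InnerProductSpace ℂ H]
    [NormedAddCommGroup K] [InnerProductSpace ℂ K]
    [NormedAddCommGroup E] [InnerProductSpace ℂ E] where
  tmul : H → K → E
  inner_tmul : ∀ (f f' : H) (g g' : K),
    ⟪tmul f g, tmul f' g'⟫ = ⟪f, f'⟫ * ⟪g, g'⟫
  dense_span : Dense (Submodule.span ℂ (Set.range fun p : H × K => tmul p.1 p.2) : Set E)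

variable {H K E H' K' E' : Type*}
variable [NormedAddCommGroup H] [InnerProductSpace ℂ H]
variable [NormedAddCommGroup K] [InnerProductSpace ℂ K]
variable [NormedAddCommGroup E] [InnerProductSpace ℂ E]
variable [NormedAddCommGroup H'] [InnerProductSpace ℂ H']
variable [NormedAddCommGroup K'] [InnerProductSpace ℂ K']
variable [NormedAddCommGroup E'] [InnerProductSpace ℂ E']

/-- The orthogonal projection onto a (closed) subspace, as an operator `H →L[ℂ] H`. -/
def projL (V : Submodule ℂ H) [HasOrthogonalProjection V] : H →L[ℂ] H :=
  V.subtypeL.comp (orthogonalProjection V)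

/-- `R` is the tensor product operator `Q ⊗ T`, i.e. it is determined on elementary
tensors by `(Q ⊗ T)(f ⊗ g) = Qf ⊗ Tg`. -/
def IsTensorOp (tp : HilbertTensor H K E) (tp' : HilbertTensor H' K' E')
    (Q : H →L[ℂ] H') (T : K →L[ℂ] K') (R : E →L[ℂ] E') : Prop :=
  ∀ (f : H) (g : K), R (tp.tmul f g) = tp'.tmul (Q f) (T g)

/-- The tensor product `V ⊗ W` of subspaces: the closure of the span of elementary
tensors of elements of `V` and `W`. -/
def tsub (tp : HilbertTensor H K E) (V : Submodule ℂ H) (W : Submodule ℂ K) : Submodule ℂ E :=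
  (Submodule.span ℂ {x : E | ∃ f ∈ V, ∃ g ∈ W, x = tp.tmul f g}).topologicalClosure

/-- `{(V i, Λ i, v i)}` is a g-fusion Bessel sequence in `H` with bound `B`. -/
def IsGFusionBessel {ι : Type*} {Hi : ι → Type*}
    [∀ i, NormedAddCommGroup (Hi i)] [∀ i, InnerProductSpace ℂ (Hi i)]
    (V : ι → Submodule ℂ H) [∀ i, HasOrthogonalProjection (V i)]
    (Λ : ∀ i, H →L[ℂ] Hi i) (v : ι → ℝ) (B : ℝ) : Prop :=
  (∀ i, 0 < v i) ∧ 0 < B ∧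
    ∀ f : H, ∑' i, (v i) ^ 2 * ‖Λ i (projL (V i) f)‖ ^ 2 ≤ B * ‖f‖ ^ 2

/-- `{(V i, Λ i, v i)}` is a g-fusion frame for `H` with bounds `A ≤ B`. -/
def IsGFusionFrame {ι : Type*} {Hi : ι → Type*}
    [∀ i, NormedAddCommGroup (Hi i)] [∀ i, InnerProductSpace ℂ (Hi i)]
    (V : ι → Submodule ℂ H) [∀ i, HasOrthogonalProjection (V i)]
    (Λ : ∀ i, H →L[ℂ] Hi i) (v : ι → ℝ) (A B : ℝ) : Prop :=
  (∀ i, 0 < v i) ∧ 0 < A ∧ A ≤ B ∧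
    ∀ f : H, A * ‖f‖ ^ 2 ≤ ∑' i, (v i) ^ 2 * ‖Λ i (projL (V i) f)‖ ^ 2 ∧
      ∑' i, (v i) ^ 2 * ‖Λ i (projL (V i) f)‖ ^ 2 ≤ B * ‖f‖ ^ 2

theorem projL_eq_starProjection (V : Submodule ℂ H) [HasOrthogonalProjection V] :
    projL V = V.starProjection := rfl

theorem projL_map_apply_of_isSelfAdjoint [CompleteSpace E] {R : E →L[ℂ] E} (hR : IsSelfAdjoint R)
    (M : Submodule ℂ E) [HasOrthogonalProjection M]
    [HasOrthogonalProjection (M.map R.toLinearMap)] (x : E) :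
    projL M (R (projL (M.map R.toLinearMap) x)) = projL M (R x) := by
  set N := M.map R.toLinearMap
  simp only [projL_eq_starProjection]
  have hx : x - N.starProjection x ∈ Nᗮ := sub_starProjection_mem_orthogonal x
  have hRx : R (x - N.starProjection x) ∈ Mᗮ := fun u hu => by
    rw [← adjoint_inner_left, hR.adjoint_eq]
    exact (mem_orthogonal N _).1 hx _ (mem_map_of_mem hu)
  rw [eq_comm, ← sub_eq_zero, ← map_sub, ← map_sub]
  exact (starProjection_apply_eq_zero_iff M).2 hRx

theorem IsSelfAdjoint.of_mul_eq_one {R : Type*} [Monoid R] [StarMul R] {a b : R}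
    (ha : IsSelfAdjoint a) (hab : a * b = 1) : IsSelfAdjoint b :=
  calc star b = star b * (a * b) := by rw [hab, mul_one]
    _ = star (a * b) * b := by rw [star_mul, ha.star_eq, mul_assoc]
    _ = b := by rw [hab, star_one, one_mul]

theorem tsum_prod_mul_of_nonneg {ι κ : Type*} {a : ι → ℝ} {b : κ → ℝ} (ha : Summable a)
    (hb : Summable b) (ha0 : ∀ i, 0 ≤ a i) (hb0 : ∀ j, 0 ≤ b j) :
    ∑' p : ι × κ, a p.1 * b p.2 = (∑' i, a i) * ∑' j, b j :=
  (ha.tsum_mul_tsum hb (ha.mul_of_nonneg hb ha0 hb0)).symm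

theorem summable_of_norm_sum_sq_le {ι F : Type*} [NormedAddCommGroup F] [CompleteSpace F]
    {x : ι → F} {a : ι → ℝ} {C : ℝ} (ha : Summable a)
    (hx : ∀ t : Finset ι, ‖∑ i ∈ t, x i‖ ^ 2 ≤ C * ∑ i ∈ t, a i) : Summable x := by
  refine summable_iff_vanishing_norm.2 fun ε hε => ?_
  obtain ⟨s, hs⟩ := summable_iff_vanishing_norm.1 ha (ε ^ 2 / (|C| + 1)) (by positivity)
  refine ⟨s, fun t hts => ?_⟩
  have hat : |∑ i ∈ t, a i| < ε ^ 2 / (|C| + 1) := hs t hts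
  rw [lt_div_iff₀ (by positivity)] at hat
  have hsq : ‖∑ i ∈ t, x i‖ ^ 2 < ε ^ 2 :=
    calc ‖∑ i ∈ t, x i‖ ^ 2 ≤ C * ∑ i ∈ t, a i := hx t
      _ ≤ |C| * |∑ i ∈ t, a i| := (le_abs_self _).trans (abs_mul _ _).le
      _ < ε ^ 2 := by nlinarith [abs_nonneg C, abs_nonneg (∑ i ∈ t, a i)]
  exact lt_of_pow_lt_pow_left₀ 2 hε.le hsq

section GFrame

variable {ι : Type*} {Hi : ι → Type*} [∀ i, NormedAddCommGroup (Hi i)]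
  [∀ i, InnerProductSpace ℂ (Hi i)] {T : ∀ i, H →L[ℂ] Hi i} {A B : ℝ}

theorem sum_norm_sq_le_of_bessel (hsum : ∀ f, Summable fun i => ‖T i f‖ ^ 2)
    (hB : ∀ f, ∑' i, ‖T i f‖ ^ 2 ≤ B * ‖f‖ ^ 2) (f : H) (t : Finset ι) :
    ∑ i ∈ t, ‖T i f‖ ^ 2 ≤ B * ‖f‖ ^ 2 :=
  (Summable.sum_le_tsum t (fun i _ => by positivity) (hsum f)).trans (hB f)

variable [CompleteSpace H] [∀ i, CompleteSpace (Hi i)]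

theorem norm_sum_adjoint_apply_sq_le (hsum : ∀ f, Summable fun i => ‖T i f‖ ^ 2)
    (hB : ∀ f, ∑' i, ‖T i f‖ ^ 2 ≤ B * ‖f‖ ^ 2) (f : H) (t : Finset ι) :
    ‖∑ i ∈ t, adjoint (T i) (T i f)‖ ^ 2 ≤ B * ∑ i ∈ t, ‖T i f‖ ^ 2 := by
  set h := ∑ i ∈ t, adjoint (T i) (T i f)
  have hinner : ‖h‖ ^ 2 ≤ ∑ i ∈ t, ‖T i h‖ * ‖T i f‖ := by
    calc ‖h‖ ^ 2 = (⟪h, h⟫).re := (inner_self_eq_norm_sq (𝕜 := ℂ) h).symm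
      _ = ∑ i ∈ t, (⟪T i h, T i f⟫).re := by
        simp only [h, inner_sum, adjoint_inner_right, Complex.re_sum]
      _ ≤ ∑ i ∈ t, ‖T i h‖ * ‖T i f‖ := Finset.sum_le_sum fun i _ =>
        (Complex.re_le_norm _).trans (norm_inner_le_norm _ _)
  have hbessel := sum_norm_sq_le_of_bessel hsum hB h t
  have hcs := Finset.sum_mul_sq_le_sq_mul_sq t (fun i => ‖T i h‖) (fun i => ‖T i f‖)
  have hnn : 0 ≤ ∑ i ∈ t, ‖T i f‖ ^ 2 := by positivity
  rcases (norm_nonneg h).eq_or_lt with h0 | hpos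
  · rw [← h0, zero_pow two_ne_zero]
    rcases le_or_gt 0 B with hB0 | hB0
    · positivity
    · have hzero : ∑ i ∈ t, ‖T i f‖ ^ 2 = 0 :=
        le_antisymm ((sum_norm_sq_le_of_bessel hsum hB f t).trans
          (mul_nonpos_of_nonpos_of_nonneg hB0.le (sq_nonneg _))) hnn
      rw [hzero, mul_zero]
  · have : (‖h‖ ^ 2) ^ 2 ≤ (B * ∑ i ∈ t, ‖T i f‖ ^ 2) * ‖h‖ ^ 2 := by
      nlinarith [pow_le_pow_left₀ (by positivity) hinner 2]
    nlinarith [pow_pos hpos 2]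

theorem summable_adjoint_apply (hsum : ∀ f, Summable fun i => ‖T i f‖ ^ 2)
    (hB : ∀ f, ∑' i, ‖T i f‖ ^ 2 ≤ B * ‖f‖ ^ 2) (f : H) :
    Summable fun i => adjoint (T i) (T i f) :=
  summable_of_norm_sum_sq_le (hsum f) (norm_sum_adjoint_apply_sq_le hsum hB f)

theorem inner_tsum_adjoint_apply (hsum : ∀ f, Summable fun i => ‖T i f‖ ^ 2)
    (hB : ∀ f, ∑' i, ‖T i f‖ ^ 2 ≤ B * ‖f‖ ^ 2) (f g : H) :
    ⟪g, ∑' i, adjoint (T i) (T i f)⟫ = ∑' i, ⟪T i g, T i f⟫ := by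
  rw [← innerSL_apply_apply, (innerSL ℂ g).map_tsum (summable_adjoint_apply hsum hB f)]
  simp only [innerSL_apply_apply, adjoint_inner_right]

theorem norm_tsum_adjoint_apply_sq_le (hsum : ∀ f, Summable fun i => ‖T i f‖ ^ 2)
    (hB : ∀ f, ∑' i, ‖T i f‖ ^ 2 ≤ B * ‖f‖ ^ 2) (f : H) :
    ‖∑' i, adjoint (T i) (T i f)‖ ^ 2 ≤ B * ∑' i, ‖T i f‖ ^ 2 :=
  le_of_tendsto_of_tendsto'
    (((continuous_norm.tendsto _).comp (summable_adjoint_apply hsum hB f).hasSum).pow 2)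
    ((hsum f).hasSum.const_mul B) (norm_sum_adjoint_apply_sq_le hsum hB f)

theorem inner_self_tsum_adjoint_apply (hsum : ∀ f, Summable fun i => ‖T i f‖ ^ 2)
    (hB : ∀ f, ∑' i, ‖T i f‖ ^ 2 ≤ B * ‖f‖ ^ 2) (f : H) :
    ⟪f, ∑' i, adjoint (T i) (T i f)⟫ = ((∑' i, ‖T i f‖ ^ 2 : ℝ) : ℂ) := by
  rw [inner_tsum_adjoint_apply hsum hB, Complex.ofReal_tsum]
  simp only [inner_self_eq_norm_sq_to_K, Complex.ofReal_pow]
  rfl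

variable {S S' : H →L[ℂ] H}

theorem isSelfAdjoint_of_eq_tsum_adjoint (hsum : ∀ f, Summable fun i => ‖T i f‖ ^ 2)
    (hB : ∀ f, ∑' i, ‖T i f‖ ^ 2 ≤ B * ‖f‖ ^ 2)
    (hS : ∀ f, S f = ∑' i, adjoint (T i) (T i f)) : IsSelfAdjoint S := by
  refine LinearMap.IsSymmetric.isSelfAdjoint fun f g => ?_
  change ⟪S f, g⟫ = ⟪f, S g⟫
  rw [← inner_conj_symm, hS, hS, inner_tsum_adjoint_apply hsum hB,
    inner_tsum_adjoint_apply hsum hB, Complex.conj_tsum]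
  simp only [inner_conj_symm]

theorem dual_bounds_of_eq_tsum_adjoint (hsum : ∀ f, Summable fun i => ‖T i f‖ ^ 2)
    (hA0 : 0 < A) (hB0 : 0 < B) (hA : ∀ f, A * ‖f‖ ^ 2 ≤ ∑' i, ‖T i f‖ ^ 2)
    (hB : ∀ f, ∑' i, ‖T i f‖ ^ 2 ≤ B * ‖f‖ ^ 2)
    (hS : ∀ f, S f = ∑' i, adjoint (T i) (T i f)) (hSS' : ∀ f, S (S' f) = f) (f : H) :
    ‖f‖ ^ 2 / B ≤ ∑' i, ‖T i (S' f)‖ ^ 2 ∧ ∑' i, ‖T i (S' f)‖ ^ 2 ≤ B * ‖f‖ ^ 2 / A ^ 2 := by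
  have hf : ∑' i, adjoint (T i) (T i (S' f)) = f := by rw [← hS, hSS']
  constructor
  · rw [div_le_iff₀' hB0]
    simpa only [hf] using norm_tsum_adjoint_apply_sq_le hsum hB (S' f)
  · have hinner : A * ‖S' f‖ ^ 2 ≤ ‖S' f‖ * ‖f‖ :=
      calc A * ‖S' f‖ ^ 2 ≤ ∑' i, ‖T i (S' f)‖ ^ 2 := hA (S' f)
        _ = (⟪S' f, S (S' f)⟫).re := by
          rw [hS, inner_self_tsum_adjoint_apply hsum hB, Complex.ofReal_re]
        _ = (⟪S' f, f⟫).re := by rw [hSS']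
        _ ≤ ‖S' f‖ * ‖f‖ := (Complex.re_le_norm _).trans (norm_inner_le_norm _ _)
    have hS'f : A * ‖S' f‖ ≤ ‖f‖ := by
      rcases (norm_nonneg (S' f)).eq_or_lt with h0 | hpos
      · rw [← h0, mul_zero]; exact norm_nonneg f
      · nlinarith
    rw [le_div_iff₀ (by positivity)]
    nlinarith [hB (S' f), mul_le_mul hS'f hS'f (by positivity) (norm_nonneg f)]

end GFrame

section GFusionFrame

variable {ι : Type*} {Hi : ι → Type*} [∀ i, NormedAddCommGroup (Hi i)]
  [∀ i, InnerProductSpace ℂ (Hi i)] {V : ι → Submodule ℂ H} [∀ i, HasOrthogonalProjection (V i)]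
  {Λ : ∀ i, H →L[ℂ] Hi i} {v : ι → ℝ} {A B : ℝ}

def gFusionOp (V : ι → Submodule ℂ H) [∀ i, HasOrthogonalProjection (V i)]
    (Λ : ∀ i, H →L[ℂ] Hi i) (v : ι → ℝ) (i : ι) : H →L[ℂ] Hi i :=
  (v i : ℂ) • (Λ i ∘L projL (V i))

theorem norm_gFusionOp_apply_sq (i : ι) (f : H) :
    ‖gFusionOp V Λ v i f‖ ^ 2 = v i ^ 2 * ‖Λ i (projL (V i) f)‖ ^ 2 := by
  simp [gFusionOp, norm_smul, mul_pow]

theorem adjoint_gFusionOp_apply [CompleteSpace H] [∀ i, CompleteSpace (Hi i)] (i : ι) (f : H) :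
    adjoint (gFusionOp V Λ v i) (gFusionOp V Λ v i f) =
      ((v i) ^ 2 : ℝ) • projL (V i) (adjoint (Λ i) (Λ i (projL (V i) f))) := by
  have hP : adjoint (projL (V i)) = projL (V i) := by
    rw [projL_eq_starProjection, (isSelfAdjoint_starProjection (V i)).adjoint_eq]
  rw [gFusionOp, map_smulₛₗ, adjoint_comp, hP, RCLike.real_smul_eq_coe_smul (K := ℂ)]
  simp only [smul_apply, comp_apply, map_smul, smul_smul]
  congr 1
  simp [sq]

theorem IsGFusionFrame.summable (hΛ : IsGFusionFrame V Λ v A B) (f : H) :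
    Summable fun i => v i ^ 2 * ‖Λ i (projL (V i) f)‖ ^ 2 := by
  by_contra hs
  have hlower := (hΛ.2.2.2 f).1
  rw [tsum_eq_zero_of_not_summable hs] at hlower
  have hf : f = 0 := by
    by_contra hf
    nlinarith [hΛ.2.1, pow_pos (norm_pos_iff.2 hf) 2]
  subst hf
  simp at hs

theorem IsGFusionFrame.gFusionOp_bounds (hΛ : IsGFusionFrame V Λ v A B) :
    (∀ f, Summable fun i => ‖gFusionOp V Λ v i f‖ ^ 2) ∧
      (∀ f, A * ‖f‖ ^ 2 ≤ ∑' i, ‖gFusionOp V Λ v i f‖ ^ 2) ∧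
      ∀ f, ∑' i, ‖gFusionOp V Λ v i f‖ ^ 2 ≤ B * ‖f‖ ^ 2 := by
  simp only [norm_gFusionOp_apply_sq]
  exact ⟨hΛ.summable, fun f => (hΛ.2.2.2 f).1, fun f => (hΛ.2.2.2 f).2⟩

variable [CompleteSpace H] [∀ i, CompleteSpace (Hi i)] {SΛ SΛi : H →L[ℂ] H}

theorem IsGFusionFrame.isSelfAdjoint_frameOp (hΛ : IsGFusionFrame V Λ v A B)
    (hSΛ : ∀ f : H, SΛ f = ∑' i, ((v i) ^ 2 : ℝ) •
      projL (V i) (adjoint (Λ i) (Λ i (projL (V i) f)))) :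
    IsSelfAdjoint SΛ := by
  obtain ⟨hsum, -, hB⟩ := hΛ.gFusionOp_bounds
  exact isSelfAdjoint_of_eq_tsum_adjoint hsum hB (by simpa only [adjoint_gFusionOp_apply] using hSΛ)

theorem IsGFusionFrame.dual_bounds (hΛ : IsGFusionFrame V Λ v A B)
    (hSΛ : ∀ f : H, SΛ f = ∑' i, ((v i) ^ 2 : ℝ) •
      projL (V i) (adjoint (Λ i) (Λ i (projL (V i) f))))
    (hSΛ1 : SΛ.comp SΛi = ContinuousLinearMap.id ℂ H) (f : H) :
    ‖f‖ ^ 2 / B ≤ ∑' i, v i ^ 2 * ‖Λ i (projL (V i) (SΛi f))‖ ^ 2 ∧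
      ∑' i, v i ^ 2 * ‖Λ i (projL (V i) (SΛi f))‖ ^ 2 ≤ B * ‖f‖ ^ 2 / A ^ 2 := by
  obtain ⟨hsum, hA, hB⟩ := hΛ.gFusionOp_bounds
  simpa only [norm_gFusionOp_apply_sq] using
    dual_bounds_of_eq_tsum_adjoint hsum hΛ.2.1 (hΛ.2.1.trans_le hΛ.2.2.1) hA hB
      (by simpa only [adjoint_gFusionOp_apply] using hSΛ) (fun f => congr($hSΛ1 f)) f

end GFusionFrame

namespace HilbertTensor

variable (tp : HilbertTensor H K E)

theorem norm_tmul_sq (f : H) (g : K) : ‖tp.tmul f g‖ ^ 2 = ‖f‖ ^ 2 * ‖g‖ ^ 2 := by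
  have h := tp.inner_tmul f f g g
  simp only [inner_self_eq_norm_sq_to_K] at h
  exact_mod_cast h

theorem continuousLinearMap_ext {F : Type*} [NormedAddCommGroup F] [NormedSpace ℂ F] {R R' : E →L[ℂ] F}
    (h : ∀ f g, R (tp.tmul f g) = R' (tp.tmul f g)) : R = R' :=
  ContinuousLinearMap.ext_on tp.dense_span (by rintro _ ⟨⟨f, g⟩, rfl⟩; exact h f g)

variable {V : Submodule ℂ H} {W : Submodule ℂ K}

theorem tmul_mem_tsub {f : H} {g : K} (hf : f ∈ V) (hg : g ∈ W) : tp.tmul f g ∈ tsub tp V W :=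
  le_topologicalClosure _ (subset_span ⟨f, hf, g, hg, rfl⟩)

theorem mem_orthogonal_tsub {z : E} (hz : ∀ f ∈ V, ∀ g ∈ W, ⟪tp.tmul f g, z⟫ = 0) :
    z ∈ (tsub tp V W)ᗮ := by
  rw [tsub, orthogonal_closure, mem_orthogonal]
  intro u hu
  induction hu using span_induction with
  | mem x hx => obtain ⟨f, hf, g, hg, rfl⟩ := hx; exact hz f hf g hg
  | zero => exact inner_zero_left z
  | add x y _ _ hx hy => rw [inner_add_left, hx, hy, add_zero]
  | smul c x _ hx => rw [inner_smul_left, hx, mul_zero]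

theorem projL_tsub_tmul [HasOrthogonalProjection V] [HasOrthogonalProjection W]
    [HasOrthogonalProjection (tsub tp V W)] (f : H) (g : K) :
    projL (tsub tp V W) (tp.tmul f g) = tp.tmul (projL V f) (projL W g) := by
  simp only [projL_eq_starProjection]
  refine eq_starProjection_of_mem_orthogonal
    (tp.tmul_mem_tsub (V.starProjection_apply_mem f) (W.starProjection_apply_mem g))
    (tp.mem_orthogonal_tsub fun a ha b hb => ?_)
  rw [inner_sub_right, tp.inner_tmul, tp.inner_tmul, ← inner_starProjection_left_eq_right,
    starProjection_eq_self_iff.2 ha, ← inner_starProjection_left_eq_right,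
    starProjection_eq_self_iff.2 hb, sub_self]

end HilbertTensor

section TensorOp

variable [CompleteSpace H] [CompleteSpace K] [CompleteSpace E] {tp : HilbertTensor H K E}

theorem IsTensorOp.adjoint [CompleteSpace H'] [CompleteSpace K'] [CompleteSpace E']
    {tp' : HilbertTensor H' K' E'} {Q : H →L[ℂ] H'} {T : K →L[ℂ] K'} {R : E →L[ℂ] E'}
    (hR : IsTensorOp tp tp' Q T R) :
    IsTensorOp tp' tp (ContinuousLinearMap.adjoint Q) (ContinuousLinearMap.adjoint T)
      (ContinuousLinearMap.adjoint R) := by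
  intro f' g'
  refine ext_inner_right ℂ fun y => ?_
  have h : (innerSL ℂ (tp'.tmul f' g')) ∘L R =
      innerSL ℂ (tp.tmul (ContinuousLinearMap.adjoint Q f') (ContinuousLinearMap.adjoint T g')) :=
    tp.continuousLinearMap_ext fun f g => by
      simp only [comp_apply, innerSL_apply_apply, hR f g, tp.inner_tmul, tp'.inner_tmul,
        adjoint_inner_left]
  rw [adjoint_inner_left]
  exact congr($h y)

theorem IsTensorOp.isSelfAdjoint {Q : H →L[ℂ] H} {T : K →L[ℂ] K} {R : E →L[ℂ] E}
    (hR : IsTensorOp tp tp Q T R) (hQ : IsSelfAdjoint Q) (hT : IsSelfAdjoint T) :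
    IsSelfAdjoint R :=
  isSelfAdjoint_iff'.2 <| tp.continuousLinearMap_ext fun f g => by
    rw [hR.adjoint f g, hQ.adjoint_eq, hT.adjoint_eq, hR f g]

end TensorOp

theorem stmt_14_general {ι κ : Type*} [CompleteSpace H] [CompleteSpace K] [CompleteSpace E]
    {Hi : ι → Type*} [∀ i, NormedAddCommGroup (Hi i)] [∀ i, InnerProductSpace ℂ (Hi i)]
    [∀ i, CompleteSpace (Hi i)]
    {Kj : κ → Type*} [∀ j, NormedAddCommGroup (Kj j)] [∀ j, InnerProductSpace ℂ (Kj j)]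
    [∀ j, CompleteSpace (Kj j)]
    {Eij : ι → κ → Type*} [∀ i j, NormedAddCommGroup (Eij i j)]
    [∀ i j, InnerProductSpace ℂ (Eij i j)]
    (tp : HilbertTensor H K E) (tpij : ∀ i j, HilbertTensor (Hi i) (Kj j) (Eij i j))
    (V : ι → Submodule ℂ H) [∀ i, HasOrthogonalProjection (V i)]
    (W : κ → Submodule ℂ K) [∀ j, HasOrthogonalProjection (W j)]
    [∀ i j, HasOrthogonalProjection (tsub tp (V i) (W j))]
    (Λ : ∀ i, H →L[ℂ] Hi i) (Γ : ∀ j, K →L[ℂ] Kj j)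
    (v : ι → ℝ) (w : κ → ℝ) (A B C D : ℝ)
    (hΛ : IsGFusionFrame V Λ v A B) (hΓ : IsGFusionFrame W Γ w C D)
    (Rij : ∀ i j, E →L[ℂ] Eij i j)
    (hRij : ∀ i j, IsTensorOp tp (tpij i j) (Λ i) (Γ j) (Rij i j))
    (SΛ SΛi : H →L[ℂ] H) (SΓ SΓi : K →L[ℂ] K)
    (hSΛ : ∀ f : H, SΛ f = ∑' i, ((v i) ^ 2 : ℝ) •
      projL (V i) (ContinuousLinearMap.adjoint (Λ i) (Λ i (projL (V i) f))))
    (hSΓ : ∀ g : K, SΓ g = ∑' j, ((w j) ^ 2 : ℝ) •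
      projL (W j) (ContinuousLinearMap.adjoint (Γ j) (Γ j (projL (W j) g))))
    (hSΛ1 : SΛ.comp SΛi = ContinuousLinearMap.id ℂ H)
    (hSΓ1 : SΓ.comp SΓi = ContinuousLinearMap.id ℂ K)
    (Si : E →L[ℂ] E)
    (hSi : IsTensorOp tp tp SΛi SΓi Si)
    [∀ i j, HasOrthogonalProjection ((tsub tp (V i) (W j)).map Si.toLinearMap)] :
    ∀ (f : H) (g : K),
      1 / (B * D) * ‖tp.tmul f g‖ ^ 2 ≤
        ∑' p : ι × κ, (v p.1 * w p.2) ^ 2 *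
          ‖Rij p.1 p.2 (projL (tsub tp (V p.1) (W p.2))
            (Si (projL ((tsub tp (V p.1) (W p.2)).map Si.toLinearMap) (tp.tmul f g))))‖ ^ 2 ∧
      ∑' p : ι × κ, (v p.1 * w p.2) ^ 2 *
          ‖Rij p.1 p.2 (projL (tsub tp (V p.1) (W p.2))
            (Si (projL ((tsub tp (V p.1) (W p.2)).map Si.toLinearMap) (tp.tmul f g))))‖ ^ 2 ≤
        B * D / (A ^ 2 * C ^ 2) * ‖tp.tmul f g‖ ^ 2 := by
  intro f g
  have hSi_sa : IsSelfAdjoint Si :=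
    hSi.isSelfAdjoint ((hΛ.isSelfAdjoint_frameOp hSΛ).of_mul_eq_one hSΛ1)
      ((hΓ.isSelfAdjoint_frameOp hSΓ).of_mul_eq_one hSΓ1)
  set a := fun i => v i ^ 2 * ‖Λ i (projL (V i) (SΛi f))‖ ^ 2
  set b := fun j => w j ^ 2 * ‖Γ j (projL (W j) (SΓi g))‖ ^ 2
  have hterm : ∀ p : ι × κ, (v p.1 * w p.2) ^ 2 *
      ‖Rij p.1 p.2 (projL (tsub tp (V p.1) (W p.2))
        (Si (projL ((tsub tp (V p.1) (W p.2)).map Si.toLinearMap) (tp.tmul f g))))‖ ^ 2 =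
      a p.1 * b p.2 := by
    rintro ⟨i, j⟩
    rw [projL_map_apply_of_isSelfAdjoint hSi_sa, hSi f g, tp.projL_tsub_tmul, hRij i j,
      (tpij i j).norm_tmul_sq]
    ring
  have hprod : ∑' p : ι × κ, a p.1 * b p.2 = (∑' i, a i) * ∑' j, b j :=
    tsum_prod_mul_of_nonneg (hΛ.summable _) (hΓ.summable _) (fun i => by positivity)
      fun j => by positivity
  obtain ⟨haf, hfa⟩ := hΛ.dual_bounds hSΛ hSΛ1 f
  obtain ⟨hbg, hgb⟩ := hΓ.dual_bounds hSΓ hSΓ1 g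
  have hB : 0 < B := hΛ.2.1.trans_le hΛ.2.2.1
  have hD : 0 < D := hΓ.2.1.trans_le hΓ.2.2.1
  rw [tsum_congr hterm, hprod, tp.norm_tmul_sq]
  constructor
  · calc 1 / (B * D) * (‖f‖ ^ 2 * ‖g‖ ^ 2) = (‖f‖ ^ 2 / B) * (‖g‖ ^ 2 / D) := by ring
      _ ≤ _ := mul_le_mul haf hbg (by positivity) (tsum_nonneg fun i => by positivity)
  · calc (∑' i, a i) * ∑' j, b j ≤ (B * ‖f‖ ^ 2 / A ^ 2) * (D * ‖g‖ ^ 2 / C ^ 2) :=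
          mul_le_mul hfa hgb (tsum_nonneg fun j => by positivity) (by positivity)
      _ = B * D / (A ^ 2 * C ^ 2) * (‖f‖ ^ 2 * ‖g‖ ^ 2) := by ring

/-- the canonical dual family
`Θ = {(S⁻¹(V_i ⊗ W_j), (Λ_i ⊗ Γ_j) P_{V_i ⊗ W_j} S⁻¹, v_i w_j)}` is a g-fusion frame
for `H ⊗ K` with bounds `1/(BD)` and `BD/(A²C²)`. -/
theorem stmt_14 {ι κ : Type*} [CompleteSpace H] [CompleteSpace K] [CompleteSpace E]
    {Hi : ι → Type*} [∀ i, NormedAddCommGroup (Hi i)] [∀ i, InnerProductSpace ℂ (Hi i)]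
    [∀ i, CompleteSpace (Hi i)]
    {Kj : κ → Type*} [∀ j, NormedAddCommGroup (Kj j)] [∀ j, InnerProductSpace ℂ (Kj j)]
    [∀ j, CompleteSpace (Kj j)]
    {Eij : ι → κ → Type*} [∀ i j, NormedAddCommGroup (Eij i j)]
    [∀ i j, InnerProductSpace ℂ (Eij i j)] [∀ i j, CompleteSpace (Eij i j)]
    (tp : HilbertTensor H K E) (tpij : ∀ i j, HilbertTensor (Hi i) (Kj j) (Eij i j))
    (V : ι → Submodule ℂ H) [∀ i, HasOrthogonalProjection (V i)]
    (W : κ → Submodule ℂ K) [∀ j, HasOrthogonalProjection (W j)]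
    [∀ i j, HasOrthogonalProjection (tsub tp (V i) (W j))]
    (Λ : ∀ i, H →L[ℂ] Hi i) (Γ : ∀ j, K →L[ℂ] Kj j)
    (v : ι → ℝ) (w : κ → ℝ) (A B C D : ℝ)
    (hΛ : IsGFusionFrame V Λ v A B) (hΓ : IsGFusionFrame W Γ w C D)
    (Rij : ∀ i j, E →L[ℂ] Eij i j)
    (hRij : ∀ i j, IsTensorOp tp (tpij i j) (Λ i) (Γ j) (Rij i j))
    (SΛ SΛi : H →L[ℂ] H) (SΓ SΓi : K →L[ℂ] K)
    (hSΛ : ∀ f : H, SΛ f = ∑' i, ((v i) ^ 2 : ℝ) •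
      projL (V i) (ContinuousLinearMap.adjoint (Λ i) (Λ i (projL (V i) f))))
    (hSΓ : ∀ g : K, SΓ g = ∑' j, ((w j) ^ 2 : ℝ) •
      projL (W j) (ContinuousLinearMap.adjoint (Γ j) (Γ j (projL (W j) g))))
    (hSΛ1 : SΛ.comp SΛi = ContinuousLinearMap.id ℂ H)
    (hSΛ2 : SΛi.comp SΛ = ContinuousLinearMap.id ℂ H)
    (hSΓ1 : SΓ.comp SΓi = ContinuousLinearMap.id ℂ K)
    (hSΓ2 : SΓi.comp SΓ = ContinuousLinearMap.id ℂ K)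
    (S Si : E →L[ℂ] E)
    (hS : IsTensorOp tp tp SΛ SΓ S) (hSi : IsTensorOp tp tp SΛi SΓi Si)
    (hS1 : S.comp Si = ContinuousLinearMap.id ℂ E)
    (hS2 : Si.comp S = ContinuousLinearMap.id ℂ E)
    [∀ i j, HasOrthogonalProjection ((tsub tp (V i) (W j)).map Si.toLinearMap)] :
    ∀ (f : H) (g : K),
      1 / (B * D) * ‖tp.tmul f g‖ ^ 2 ≤
        ∑' p : ι × κ, (v p.1 * w p.2) ^ 2 *
          ‖Rij p.1 p.2 (projL (tsub tp (V p.1) (W p.2))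
            (Si (projL ((tsub tp (V p.1) (W p.2)).map Si.toLinearMap) (tp.tmul f g))))‖ ^ 2 ∧
      ∑' p : ι × κ, (v p.1 * w p.2) ^ 2 *
          ‖Rij p.1 p.2 (projL (tsub tp (V p.1) (W p.2))
            (Si (projL ((tsub tp (V p.1) (W p.2)).map Si.toLinearMap) (tp.tmul f g))))‖ ^ 2 ≤
        B * D / (A ^ 2 * C ^ 2) * ‖tp.tmul f g‖ ^ 2 :=
  stmt_14_general tp tpij V W Λ Γ v w A B C D hΛ hΓ Rij hRij SΛ SΛi SΓ SΓi hSΛ hSΓ hSΛ1 hSΓ1 Si hSi
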